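/- Let the agents be partitioned into groups with externality factors α_j satisfying α_j(|G_j|-1) ≤ 1. Let y = min_i x_i be the leftmost agent location and y* any minimizer of the maximum cost MC(z) = max_i c_i(z). Then MC(y) ≤ 3 · MC(y*), provided MC(y*) > 0 and y ≠ y*. -/

import Mathlib

/-!
The leftmost agent alone already pays at least `|y - y*|` at `y*`, because its externality
term is nonnegative on `[0, 1]`; hence `|y - y*| ≤ MC(y*)`. Moving the facility by `d`
changes an agent's distance term by at most `d` and its externality term by at most
`α (|G| - 1) d ≤ d`, so `MC(y) ≤ MC(y*) + 2 |y - y*| ≤ 3 MC(y*)`.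
-/

open Finset

section ExternalityCost

variable {ι : Type*} (x : ι → ℝ)

theorem sum_one_sub_abs_sub_le (S : Finset ι) (y z : ℝ) :
    ∑ k ∈ S, (1 - |y - x k|) ≤ ∑ k ∈ S, (1 - |z - x k|) + #S * |y - z| :=
  calc ∑ k ∈ S, (1 - |y - x k|) ≤ ∑ k ∈ S, ((1 - |z - x k|) + |y - z|) :=
        sum_le_sum fun k _ => by linarith [abs_sub_le z y (x k), abs_sub_comm y z]
    _ = ∑ k ∈ S, (1 - |z - x k|) + #S * |y - z| := by
        rw [sum_add_distrib, sum_const, nsmul_eq_mul]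

/-- The cost at `y` of agent `i` whose group-mates other than itself form `S`. -/
def externalityCost (a : ℝ) (i : ι) (S : Finset ι) (y : ℝ) : ℝ :=
  |y - x i| + a * ∑ k ∈ S, (1 - |y - x k|)

variable {x} {a : ℝ}

theorem externalityCost_le_add (ha : 0 ≤ a) (i : ι) (S : Finset ι) (y z : ℝ) :
    externalityCost x a i S y ≤ externalityCost x a i S z + (1 + a * #S) * |y - z| := by
  have hsum := mul_le_mul_of_nonneg_left (sum_one_sub_abs_sub_le x S y z) ha
  unfold externalityCost
  linarith [abs_sub_le y z (x i)]

theorem abs_sub_le_externalityCost (ha : 0 ≤ a) {i : ι} {S : Finset ι} {y : ℝ}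
    (hS : ∀ k ∈ S, |y - x k| ≤ 1) : |y - x i| ≤ externalityCost x a i S y :=
  le_add_of_nonneg_right (mul_nonneg ha (sum_nonneg fun k hk => sub_nonneg.2 (hS k hk)))

end ExternalityCost

theorem leftmost_three_approx_general (n m : ℕ)
    (hne : (Finset.univ : Finset (Fin n)).Nonempty)
    (g : Fin n → Fin m) (α : Fin m → ℝ) (x : Fin n → ℝ)
    (hx : ∀ i, x i ∈ Set.Icc (0:ℝ) 1)
    (hα : ∀ j, 0 ≤ α j)
    (hCoA : ∀ j, α j * (((Finset.univ.filter fun i => g i = j).card : ℝ) - 1) ≤ 1)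
    (c : Fin n → ℝ → ℝ)
    (hc : ∀ i y, c i y = |y - x i| + α (g i) *
        ∑ k ∈ (Finset.univ.filter fun k => g k = g i).erase i, (1 - |y - x k|))
    (MC : ℝ → ℝ) (hMC : ∀ y, MC y = Finset.univ.sup' hne (fun i => c i y))
    (y : ℝ) (hy : y = Finset.univ.inf' hne x)
    (ystar : ℝ) (hystar : ystar ∈ Set.Icc (0:ℝ) 1) :
    MC y ≤ 3 * MC ystar := by
  have hcost : ∀ i z, c i z =
      externalityCost x (α (g i)) i ((univ.filter fun k => g k = g i).erase i) z := hc
  have hc_le_MC : ∀ i z, c i z ≤ MC z := fun i z => hMC z ▸ le_sup' (c · z) (mem_univ i)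
  have hmove : ∀ i, c i y ≤ c i ystar + 2 * |y - ystar| := by
    intro i
    have hcard : α (g i) * #((univ.filter fun k => g k = g i).erase i) ≤ 1 := by
      rw [cast_card_erase_of_mem (by simp)]
      exact hCoA (g i)
    rw [hcost, hcost]
    refine (externalityCost_le_add (hα _) _ _ y ystar).trans ?_
    gcongr
    linarith
  obtain ⟨i0, -, hi0⟩ := exists_mem_eq_inf' hne x
  have hdist : |y - ystar| ≤ MC ystar :=
    calc |y - ystar| = |ystar - x i0| := by rw [hy, hi0, abs_sub_comm]
      _ ≤ c i0 ystar := by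
        rw [hcost]
        exact abs_sub_le_externalityCost (hα _) fun k _ =>
          abs_sub_le_of_nonneg_of_le hystar.1 hystar.2 (hx k).1 (hx k).2
      _ ≤ MC ystar := hc_le_MC i0 ystar
  calc MC y ≤ MC ystar + 2 * |y - ystar| := by
        rw [hMC y]
        exact sup'_le _ _ fun i _ => (hmove i).trans (by linarith [hc_le_MC i ystar])
    _ ≤ 3 * MC ystar := by linarith

/-- the Leftmost mechanism is a 3-approximation for the maximum
cost with multiple groups. -/
theorem leftmost_three_approx (n m : ℕ)
    (hne : (Finset.univ : Finset (Fin n)).Nonempty)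
    (g : Fin n → Fin m) (α : Fin m → ℝ) (x : Fin n → ℝ)
    (hx : ∀ i, x i ∈ Set.Icc (0:ℝ) 1)
    (hα : ∀ j, 0 ≤ α j)
    (hCoA : ∀ j, α j * (((Finset.univ.filter fun i => g i = j).card : ℝ) - 1) ≤ 1)
    (c : Fin n → ℝ → ℝ)
    (hc : ∀ i y, c i y = |y - x i| + α (g i) *
        ∑ k ∈ (Finset.univ.filter fun k => g k = g i).erase i, (1 - |y - x k|))
    (MC : ℝ → ℝ) (hMC : ∀ y, MC y = Finset.univ.sup' hne (fun i => c i y))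
    (y : ℝ) (hy : y = Finset.univ.inf' hne x)
    (ystar : ℝ) (hystar : ystar ∈ Set.Icc (0:ℝ) 1)
    (hopt : ∀ z ∈ Set.Icc (0:ℝ) 1, MC ystar ≤ MC z)
    (hpos : 0 < MC ystar) (hneq : y ≠ ystar) :
    MC y ≤ 3 * MC ystar :=
  leftmost_three_approx_general n m hne g α x hx hα hCoA c hc MC hMC y hy ystar hystar
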